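/- Wall-crossing decomposition. Let 𝔄 = [α₁,…,αₙ] be a polarized list of nonzero vectors spanning ℝʳ, let c be a chamber of 𝔄, and let τ ⊆ {1,…,n} be such that (αⱼ)_{j∈τ} is a basis of ℝʳ with c ⊆ Cone(αⱼ : j ∈ τ). Then for every ρ ⊆ {1,…,n} such that (αⱼ)_{j∈ρ} is a basis of ℝʳ, the fraction Φ_ρ lies in the ℝ-linear span, inside Frac(ℝ[x₁,…,x_r]), of Φ_τ together with the fractions Φ_σ over all σ ⊆ {1,…,n} such that (αⱼ)_{j∈σ} is a basis of ℝʳ and c is not contained in Cone(αⱼ : j ∈ σ). -/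

import Mathlib

open MvPolynomial

noncomputable section

/-- The standard inner product on `ℝʳ`. -/
def dotp {r : ℕ} (v w : Fin r → ℝ) : ℝ := ∑ i, v i * w i

/-- The linear polynomial `v₁x₁ + … + v_r x_r` associated to a vector `v ∈ ℝʳ`. -/
def linPoly {r : ℕ} (v : Fin r → ℝ) : MvPolynomial (Fin r) ℝ := ∑ i, C (v i) * X i

/-- The fraction field of `ℝ[x₁,…,x_r]`. -/
abbrev Frac (r : ℕ) := FractionRing (MvPolynomial (Fin r) ℝ)

/-- The canonical embedding of `ℝ[x₁,…,x_r]` into its fraction field. -/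
def emb {r : ℕ} (p : MvPolynomial (Fin r) ℝ) : Frac r := algebraMap _ _ p

/-- A real constant viewed inside the fraction field `Frac r`. -/
def cst {r : ℕ} (a : ℝ) : Frac r := emb (C a)

/-- `v` lies in the cone generated by the vectors `α i`, `i ∈ s`. -/
def InCone {r n : ℕ} (α : Fin n → Fin r → ℝ) (s : Finset (Fin n)) (v : Fin r → ℝ) : Prop :=
  ∃ c : Fin n → ℝ, (∀ i ∈ s, 0 ≤ c i) ∧ v = ∑ i ∈ s, c i • α i

/-- The cone generated by the vectors `α i`, `i ∈ s`, as a set. -/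
def coneSet {r n : ℕ} (α : Fin n → Fin r → ℝ) (s : Finset (Fin n)) : Set (Fin r → ℝ) :=
  {v | InCone α s v}

/-- The list `α` is polarized: some `ξ` pairs strictly positively with every `α i`. -/
def Polarized {r n : ℕ} (α : Fin n → Fin r → ℝ) : Prop :=
  ∃ ξ : Fin r → ℝ, ∀ i, 0 < dotp (α i) ξ

/-- `ε` is regular with respect to the list `α`: it lies in no proper subspace spanned by a
subset of the list. -/
def RegularWrt {r n : ℕ} (α : Fin n → Fin r → ℝ) (ε : Fin r → ℝ) : Prop :=
  ∀ s : Set (Fin n), Submodule.span ℝ (α '' s) ≠ ⊤ → ε ∉ Submodule.span ℝ (α '' s)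

/-- A set of indices is generating if the corresponding vectors span `ℝʳ`. -/
def Generating {r n : ℕ} (α : Fin n → Fin r → ℝ) (J : Set (Fin n)) : Prop :=
  Submodule.span ℝ (α '' J) = ⊤

/-- The fraction `P / ∏ᵢ αᵢ^{mᵢ}` in the fraction field. -/
def fracOf {r n : ℕ} (α : Fin n → Fin r → ℝ) (P : MvPolynomial (Fin r) ℝ) (m : Fin n → ℕ) :
    Frac r :=
  emb P / ∏ i, emb (linPoly (α i)) ^ m i

/-- `R_𝔄`: the span of all fractions `P / ∏ᵢ αᵢ^{mᵢ}`. -/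
def Rspace {r n : ℕ} (α : Fin n → Fin r → ℝ) : Submodule ℝ (Frac r) :=
  Submodule.span ℝ {x | ∃ P m, x = fracOf α P m}

/-- `G_𝔄`: the span of the fractions `1 / ∏ᵢ αᵢ^{mᵢ}` with generating support. -/
def Gspace {r n : ℕ} (α : Fin n → Fin r → ℝ) : Submodule ℝ (Frac r) :=
  Submodule.span ℝ {x | ∃ m : Fin n → ℕ, Generating α {i | 0 < m i} ∧ x = fracOf α 1 m}

/-- `NG_𝔄`: the span of the fractions `P / ∏ᵢ αᵢ^{mᵢ}` with non-generating support. -/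
def NGspace {r n : ℕ} (α : Fin n → Fin r → ℝ) : Submodule ℝ (Frac r) :=
  Submodule.span ℝ {x | ∃ P m, ¬ Generating α {i | 0 < m i} ∧ x = fracOf α P m}

/-- `Φ_σ = 1 / ∏_{j ∈ σ} αⱼ`. -/
def Phi {r n : ℕ} (α : Fin n → Fin r → ℝ) (σ : Finset (Fin n)) : Frac r :=
  (∏ j ∈ σ, emb (linPoly (α j)))⁻¹

/-- `(αⱼ)_{j ∈ σ}` is a basis of `ℝʳ`. -/
def IsConeBasis {r n : ℕ} (α : Fin n → Fin r → ℝ) (σ : Finset (Fin n)) : Prop :=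
  LinearIndependent ℝ (fun j : {x // x ∈ σ} => α j.1) ∧
    Submodule.span ℝ (α '' ↑σ) = ⊤

/-- The Gram determinant `det[⟨αⱼ, α_k⟩]_{j,k ∈ σ}`. -/
def gram {r n : ℕ} (α : Fin n → Fin r → ℝ) (σ : Finset (Fin n)) : ℝ :=
  Matrix.det (Matrix.of fun j k : {x // x ∈ σ} => dotp (α j.1) (α k.1))

/-- A Jeffrey–Kirwan functional for `(𝔄, ε)`. -/
def IsJKFunctional {r n : ℕ} (α : Fin n → Fin r → ℝ) (ε : Fin r → ℝ)
    (lam : Frac r →ₗ[ℝ] ℝ) : Prop :=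
  (∀ x ∈ NGspace α, lam x = 0) ∧
  (∀ m : Fin n → ℕ, Generating α {i | 0 < m i} → (∑ i, m i) ≠ r →
    lam (fracOf α 1 m) = 0) ∧
  (∀ σ : Finset (Fin n), IsConeBasis α σ →
    (InCone α σ ε → lam (Phi α σ) = 1 / Real.sqrt (gram α σ)) ∧
    (¬ InCone α σ ε → lam (Phi α σ) = 0))

/-- The ideal `I_{𝔄,ε}` generated by the products `∏_{j∈J} αⱼ` over all `J` such that
`ε ∉ Cone(αᵢ : i ∉ J)`. -/
def JKIdeal {r n : ℕ} (α : Fin n → Fin r → ℝ) (ε : Fin r → ℝ) :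
    Ideal (MvPolynomial (Fin r) ℝ) :=
  Ideal.span {g | ∃ J : Finset (Fin n), ¬ InCone α Jᶜ ε ∧ g = ∏ j ∈ J, linPoly (α j)}

/-- `H` is a hyperplane of `ℝʳ` spanned by a subset of the list `α`. -/
def IsHyperplaneOf {r n : ℕ} (α : Fin n → Fin r → ℝ) (H : Submodule ℝ (Fin r → ℝ)) : Prop :=
  (∃ s : Set (Fin n), H = Submodule.span ℝ (α '' s)) ∧ Module.finrank ℝ H = r - 1

/-- `Cone(𝔄)` minus the union of the hyperplanes spanned by subsets of `𝔄`. -/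
def chamberComplement {r n : ℕ} (α : Fin n → Fin r → ℝ) : Set (Fin r → ℝ) :=
  coneSet α Finset.univ \ ⋃ H ∈ {H | IsHyperplaneOf α H}, (H : Set (Fin r → ℝ))

/-- A chamber of `𝔄`: a connected component of `Cone(𝔄) ∖ ⋃_{H ∈ ℋ(𝔄)} H`. -/
def IsChamber {r n : ℕ} (α : Fin n → Fin r → ℝ) (c : Set (Fin r → ℝ)) : Prop :=
  ∃ x ∈ chamberComplement α, c = connectedComponentIn (chamberComplement α) x

/-! Fix a point `x` of the chamber. It lies on no wall, so its coordinates in every basis `σ`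
drawn from `𝔄` are nonzero; if one of them is negative, `x ∉ Cone(σ)` and `Φ_σ` is already a
generator. Otherwise pivot as in the simplex method: pick `k ∈ τ` such that `α_k` has positive
total coordinate outside `τ`, write `α_k = ∑_{j ∈ σ} u_j α_j`, and use
`Φ_σ = ∑_j u_j Φ_{σ - j + k}`. By the ratio test, `x` leaves the cone of every `σ - j + k` but
one, and for that one the sum of the coordinates of `x` along vectors outside `τ` drops. There
are finitely many bases, so this descent reaches `τ`. -/

section WallCrossing

variable {r n : ℕ}

def linPolyₗ : (Fin r → ℝ) →ₗ[ℝ] MvPolynomial (Fin r) ℝ where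
  toFun := linPoly
  map_add' v w := by simp [linPoly, add_mul, Finset.sum_add_distrib]
  map_smul' a v := by simp [linPoly, Finset.smul_sum, smul_eq_C_mul, mul_assoc]

theorem linPoly_ne_zero {v : Fin r → ℝ} (hv : v ≠ 0) : linPoly v ≠ 0 := by
  intro h
  have hsq : ∑ i, v i * v i = 0 := by
    simpa [linPoly] using congrArg (MvPolynomial.eval v) h
  exact hv (funext fun i => mul_self_eq_zero.mp
    ((Finset.sum_eq_zero_iff_of_nonneg fun i _ => mul_self_nonneg (v i)).mp hsq i
      (Finset.mem_univ i)))

theorem emb_linPoly_ne_zero {v : Fin r → ℝ} (hv : v ≠ 0) : emb (linPoly v) ≠ 0 :=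
  (map_ne_zero_iff _ (IsFractionRing.injective _ _)).mpr (linPoly_ne_zero hv)

theorem emb_linPoly_sum_smul {ι : Type*} (s : Finset ι) (u : ι → ℝ) (w : ι → Fin r → ℝ) :
    emb (linPoly (∑ j ∈ s, u j • w j)) = ∑ j ∈ s, u j • emb (linPoly (w j)) := by
  have hlin : linPoly (∑ j ∈ s, u j • w j) = ∑ j ∈ s, u j • linPoly (w j) :=
    (map_sum linPolyₗ _ s).trans (Finset.sum_congr rfl fun j _ => map_smul linPolyₗ _ _)
  simp only [emb, hlin, map_sum]
  exact Finset.sum_congr rfl fun j _ => algebraMap.coe_smul _ _ _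

theorem inv_prod_eq_sum_smul_inv_prod_insert_erase {ι 𝕜 K : Type*} [DecidableEq ι] [Field 𝕜]
    [Field K] [Algebra 𝕜 K] {D : ι → K} {σ : Finset ι} {k : ι} (hk : k ∉ σ)
    (hDk : D k ≠ 0) (hD : ∀ j ∈ σ, D j ≠ 0) (u : ι → 𝕜) (hu : D k = ∑ j ∈ σ, u j • D j) :
    (∏ j ∈ σ, D j)⁻¹ = ∑ j ∈ σ, u j • (∏ i ∈ insert k (σ.erase j), D i)⁻¹ := by
  have hterm : ∀ j ∈ σ,
      (∏ i ∈ insert k (σ.erase j), D i)⁻¹ = (D k)⁻¹ * (D j * (∏ i ∈ σ, D i)⁻¹) := by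
    intro j hj
    rw [Finset.prod_insert (fun h => hk (Finset.mem_of_mem_erase h)), mul_inv,
      ← Finset.mul_prod_erase σ D hj, mul_inv, ← mul_assoc (D j), mul_inv_cancel₀ (hD j hj),
      one_mul]
  calc (∏ j ∈ σ, D j)⁻¹ = (D k)⁻¹ * ((∑ j ∈ σ, u j • D j) * (∏ i ∈ σ, D i)⁻¹) := by
        rw [← hu, ← mul_assoc, inv_mul_cancel₀ hDk, one_mul]
    _ = ∑ j ∈ σ, u j • (∏ i ∈ insert k (σ.erase j), D i)⁻¹ := by
        simp only [Finset.sum_mul, Finset.mul_sum]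
        exact Finset.sum_congr rfl fun j hj => by
          rw [hterm j hj, smul_mul_assoc, mul_smul_comm]

theorem phi_eq_sum_smul_phi_insert_erase {α : Fin n → Fin r → ℝ} (hα : ∀ i, α i ≠ 0)
    {σ : Finset (Fin n)} {k : Fin n} (hk : k ∉ σ) (u : Fin n → ℝ)
    (hu : α k = ∑ j ∈ σ, u j • α j) :
    Phi α σ = ∑ j ∈ σ, u j • Phi α (insert k (σ.erase j)) :=
  inv_prod_eq_sum_smul_inv_prod_insert_erase hk (emb_linPoly_ne_zero (hα k))
    (fun j _ => emb_linPoly_ne_zero (hα j)) u (by rw [hu, emb_linPoly_sum_smul])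

theorem eq_div_smul_add_sum_erase {𝕜 M ι : Type*} [Field 𝕜] [AddCommGroup M] [Module 𝕜 M]
    [DecidableEq ι] {s : Finset ι} {j : ι} (hj : j ∈ s) {t u : ι → 𝕜} {w : ι → M} {x a : M}
    (hx : x = ∑ i ∈ s, t i • w i) (ha : a = ∑ i ∈ s, u i • w i) (hu : u j ≠ 0) :
    x = (t j / u j) • a + ∑ i ∈ s.erase j, (t i - u i * (t j / u j)) • w i := by
  rw [hx, ha, ← Finset.add_sum_erase s _ hj, ← Finset.add_sum_erase s _ hj, smul_add, smul_smul,
    div_mul_cancel₀ _ hu, add_assoc, Finset.smul_sum, ← Finset.sum_add_distrib]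
  congr 1
  refine Finset.sum_congr rfl fun i _ => ?_
  rw [smul_smul, ← add_smul]
  ring_nf

namespace IsConeBasis

variable {α : Fin n → Fin r → ℝ} {σ : Finset (Fin n)}

def basis (h : IsConeBasis α σ) : Module.Basis σ ℝ (Fin r → ℝ) :=
  Module.Basis.mk h.1 (h.2.symm.trans (congrArg _ (Set.image_eq_range α σ))).le

theorem basis_apply (h : IsConeBasis α σ) (j : σ) : h.basis j = α j :=
  Module.Basis.mk_apply _ _ _

theorem card_eq (h : IsConeBasis α σ) : σ.card = r := by
  simpa using (Module.finrank_eq_card_basis h.basis).symm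

end IsConeBasis

open Classical in
/-- Coordinates in the basis `(α j)_{j ∈ σ}`, extended by zero outside `σ`; the zero map when
`σ` is not a basis. -/
def coords (α : Fin n → Fin r → ℝ) (σ : Finset (Fin n)) : (Fin r → ℝ) →ₗ[ℝ] Fin n → ℝ :=
  if h : IsConeBasis α σ then
    Finsupp.lcoeFun ∘ₗ Finsupp.lmapDomain ℝ ℝ Subtype.val ∘ₗ h.basis.repr.toLinearMap
  else 0

section Coords

variable {α : Fin n → Fin r → ℝ} {σ : Finset (Fin n)}

theorem coords_apply_of_mem (h : IsConeBasis α σ) (v : Fin r → ℝ) {i : Fin n} (hi : i ∈ σ) :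
    coords α σ v i = h.basis.repr v ⟨i, hi⟩ := by
  simp only [coords, dif_pos h, LinearMap.coe_comp, Function.comp_apply,
    Finsupp.lcoeFun_apply, Finsupp.lmapDomain_apply, LinearEquiv.coe_coe]
  exact Finsupp.mapDomain_apply Subtype.val_injective _ ⟨i, hi⟩

theorem coords_self (h : IsConeBasis α σ) {k : Fin n} (hk : k ∈ σ) :
    coords α σ (α k) = Pi.single k 1 := by
  simp only [coords, dif_pos h, LinearMap.coe_comp, Function.comp_apply,
    Finsupp.lcoeFun_apply, Finsupp.lmapDomain_apply, LinearEquiv.coe_coe]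
  rw [← h.basis_apply ⟨k, hk⟩, Module.Basis.repr_self, Finsupp.mapDomain_single,
    Finsupp.single_eq_pi_single]

theorem sum_coords_smul (h : IsConeBasis α σ) (v : Fin r → ℝ) :
    ∑ i ∈ σ, coords α σ v i • α i = v := by
  conv_rhs => rw [← h.basis.sum_repr v]
  rw [← Finset.sum_coe_sort σ]
  exact Finset.sum_congr rfl fun j _ => by rw [coords_apply_of_mem h, h.basis_apply]

theorem coords_eq_of_eq_sum (h : IsConeBasis α σ) {t : Fin n → ℝ} {v : Fin r → ℝ}
    (hv : v = ∑ i ∈ σ, t i • α i) {i : Fin n} (hi : i ∈ σ) : coords α σ v i = t i := by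
  rw [coords_apply_of_mem h v hi, hv, ← Finset.sum_coe_sort σ]
  simp_rw [← h.basis_apply]
  rw [Module.Basis.repr_sum_self]

theorem mem_coneSet_iff (h : IsConeBasis α σ) {x : Fin r → ℝ} :
    x ∈ coneSet α σ ↔ ∀ i ∈ σ, 0 ≤ coords α σ x i := by
  constructor
  · rintro ⟨t, ht, hx⟩ i hi
    rw [coords_eq_of_eq_sum h hx hi]
    exact ht i hi
  · exact fun hx => ⟨coords α σ x, hx, (sum_coords_smul h x).symm⟩

end Coords

section Exchange

variable {α : Fin n → Fin r → ℝ} {σ : Finset (Fin n)} {j k : Fin n}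

theorem IsConeBasis.exchange (h : IsConeBasis α σ) (hk : k ∉ σ) (hj : j ∈ σ)
    (hu : coords α σ (α k) j ≠ 0) : IsConeBasis α (insert k (σ.erase j)) := by
  set σ' := insert k (σ.erase j)
  have hmem : ∀ i ∈ σ', α i ∈ Submodule.span ℝ (α '' σ') := fun i hi =>
    Submodule.subset_span ⟨i, hi, rfl⟩
  have hαj : α j ∈ Submodule.span ℝ (α '' σ') := by
    have hrepr := eq_div_smul_add_sum_erase (x := α j) (t := Pi.single j 1) hj
      (by simp [Pi.single_apply, ite_smul, hj]) (sum_coords_smul h (α k)).symm hu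
    rw [hrepr]
    refine Submodule.add_mem _ (Submodule.smul_mem _ _ (hmem k (Finset.mem_insert_self _ _)))
      (Submodule.sum_mem _ fun i hi => Submodule.smul_mem _ _ (hmem i ?_))
    exact Finset.mem_insert_of_mem hi
  have hspan : Submodule.span ℝ (α '' σ') = ⊤ := by
    refine top_le_iff.mp (h.2 ▸ Submodule.span_le.mpr ?_)
    rintro _ ⟨i, hi, rfl⟩
    by_cases hij : i = j
    · exact hij ▸ hαj
    · exact hmem i (Finset.mem_insert_of_mem (Finset.mem_erase.mpr ⟨hij, hi⟩))
  have hcard : σ'.card = r := by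
    rw [Finset.card_insert_of_notMem (fun h' => hk (Finset.mem_of_mem_erase h')),
      Finset.card_erase_of_mem hj, h.card_eq]
    have := h.card_eq ▸ Finset.card_pos.mpr ⟨j, hj⟩
    omega
  refine ⟨linearIndependent_of_top_le_span_of_card_eq_finrank ?_ ?_, hspan⟩
  · exact (hspan.symm.trans (congrArg _ (Set.image_eq_range α σ'))).le
  · rw [Fintype.card_coe, hcard, Module.finrank_fin_fun]

theorem coords_exchange (h : IsConeBasis α σ) (hk : k ∉ σ) (hj : j ∈ σ)
    (hu : coords α σ (α k) j ≠ 0) (x : Fin r → ℝ) {i : Fin n}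
    (hi : i ∈ insert k (σ.erase j)) :
    coords α (insert k (σ.erase j)) x i =
      if i = k then coords α σ x j / coords α σ (α k) j
      else coords α σ x i - coords α σ (α k) i * (coords α σ x j / coords α σ (α k) j) := by
  refine coords_eq_of_eq_sum (t := fun i => if i = k then coords α σ x j / coords α σ (α k) j
    else coords α σ x i - coords α σ (α k) i * (coords α σ x j / coords α σ (α k) j))
    (h.exchange hk hj hu) ?_ hi
  have hkj : k ∉ σ.erase j := fun h' => hk (Finset.mem_of_mem_erase h')
  rw [Finset.sum_insert hkj, if_pos rfl, Finset.sum_congr rfl fun i hi => by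
    rw [if_neg fun hik : i = k => hkj (hik ▸ hi)]]
  exact eq_div_smul_add_sum_erase hj (sum_coords_smul h x).symm (sum_coords_smul h (α k)).symm hu

end Exchange

section Regular

variable {α : Fin n → Fin r → ℝ} {σ : Finset (Fin n)}

theorem IsConeBasis.isHyperplaneOf_span_erase (h : IsConeBasis α σ) {j : Fin n} (hj : j ∈ σ) :
    IsHyperplaneOf α (Submodule.span ℝ (α '' (σ.erase j))) := by
  refine ⟨⟨_, rfl⟩, ?_⟩
  have hli : LinearIndependent ℝ (fun i : σ.erase j => α i) :=
    h.1.comp (fun i : σ.erase j => (⟨i, Finset.mem_of_mem_erase i.2⟩ : σ)) fun _ _ hab =>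
      Subtype.ext (congrArg Subtype.val hab :)
  rw [Set.image_eq_range]
  refine (finrank_span_eq_card hli).trans ?_
  rw [Fintype.card_coe, Finset.card_erase_of_mem hj, h.card_eq]

theorem coords_ne_zero_of_mem_chamberComplement (h : IsConeBasis α σ) {x : Fin r → ℝ}
    (hx : x ∈ chamberComplement α) {i : Fin n} (hi : i ∈ σ) : coords α σ x i ≠ 0 := by
  intro h0
  refine hx.2 (Set.mem_biUnion (h.isHyperplaneOf_span_erase hi) ?_)
  rw [← sum_coords_smul h x, ← Finset.add_sum_erase σ _ hi, h0, zero_smul, zero_add]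
  exact Submodule.sum_mem _ fun i' hi' =>
    Submodule.smul_mem _ _ (Submodule.subset_span ⟨i', hi', rfl⟩)

end Regular

def weightOutside (α : Fin n → Fin r → ℝ) (τ : Finset (Fin n)) (x : Fin r → ℝ)
    (σ : Finset (Fin n)) : ℝ :=
  ∑ j ∈ σ \ τ, coords α σ x j

def phisMissing (α : Fin n → Fin r → ℝ) (x : Fin r → ℝ) : Set (Frac r) :=
  {y | ∃ σ, IsConeBasis α σ ∧ x ∉ coneSet α σ ∧ y = Phi α σ}

section Descent

variable {α : Fin n → Fin r → ℝ} {τ σ : Finset (Fin n)} {x : Fin r → ℝ}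

theorem weightOutside_pos (h : IsConeBasis α σ) (hτ : IsConeBasis α τ) (hστ : σ ≠ τ)
    (hpos : ∀ i ∈ σ, 0 < coords α σ x i) : 0 < weightOutside α τ x σ := by
  refine Finset.sum_pos (fun j hj => hpos j (Finset.mem_sdiff.mp hj).1) ?_
  refine Finset.sdiff_nonempty.mpr fun hsub => hστ ?_
  exact Finset.eq_of_subset_of_card_le hsub (by rw [h.card_eq, hτ.card_eq])

/-- Writing `x = ∑_{k ∈ τ} s_k α_k` with `s_k ≥ 0`, the weight of `x` outside `τ` is
`∑_{k ∈ τ} s_k · (weight of α_k outside τ)`, so some `α_k` has positive weight; for `k ∈ σ ∩ τ`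
that weight is `0`. -/
theorem exists_entering (h : IsConeBasis α σ) (hτ : IsConeBasis α τ) (hxτ : x ∈ coneSet α τ)
    (hpos : 0 < weightOutside α τ x σ) :
    ∃ k ∈ τ, k ∉ σ ∧ 0 < ∑ j ∈ σ \ τ, coords α σ (α k) j := by
  have hsum : weightOutside α τ x σ =
      ∑ k ∈ τ, coords α τ x k * ∑ j ∈ σ \ τ, coords α σ (α k) j := by
    conv_lhs => rw [weightOutside, ← sum_coords_smul hτ x]
    simp only [map_sum, map_smul, Finset.sum_apply, Pi.smul_apply, smul_eq_mul, Finset.mul_sum]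
    exact Finset.sum_comm
  obtain ⟨k, hkτ, hk⟩ := Finset.exists_lt_of_sum_lt (f := fun _ => (0 : ℝ))
    (by simpa [hsum] using hpos)
  have hw := pos_of_mul_pos_right hk ((mem_coneSet_iff hτ).mp hxτ k hkτ)
  refine ⟨k, hkτ, fun hkσ => ?_, hw⟩
  rw [coords_self h hkσ] at hw
  simp [Finset.sum_pi_single', hkτ] at hw

theorem weightOutside_exchange (h : IsConeBasis α σ) {k js : Fin n} (hkτ : k ∈ τ) (hk : k ∉ σ)
    (hjs : js ∈ σ) (hu : coords α σ (α k) js ≠ 0) :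
    weightOutside α τ x (insert k (σ.erase js)) = weightOutside α τ x σ -
      coords α σ x js / coords α σ (α k) js * ∑ j ∈ σ \ τ, coords α σ (α k) j := by
  set u := coords α σ (α k)
  set t := coords α σ x
  have hsd : insert k (σ.erase js) \ τ = (σ \ τ).erase js := by
    ext i
    simp only [Finset.mem_sdiff, Finset.mem_insert, Finset.mem_erase]
    grind
  calc weightOutside α τ x (insert k (σ.erase js))
      = ∑ i ∈ (σ \ τ).erase js, (t i - u i * (t js / u js)) := by
        rw [weightOutside, hsd]
        refine Finset.sum_congr rfl fun i hi => ?_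
        have hi' : i ∈ σ.erase js := Finset.erase_subset_erase js Finset.sdiff_subset hi
        rw [coords_exchange h hk hjs hu x (Finset.mem_insert_of_mem hi'),
          if_neg fun hik : i = k => hk (hik ▸ Finset.mem_of_mem_erase hi')]
    _ = ∑ i ∈ σ \ τ, (t i - u i * (t js / u js)) :=
        Finset.sum_erase _ (by rw [mul_div_cancel₀ _ hu, sub_self])
    _ = _ := by
        rw [Finset.sum_sub_distrib, ← Finset.sum_mul, weightOutside, mul_comm]

/-- The ratio test: for `u_j < 0` the new coordinate of `x` along `α_k` is negative, and for
`u_j > 0` the one along `α_js` is `≤ 0`, hence `< 0` as `x` is off the walls. -/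
theorem notMem_coneSet_exchange (h : IsConeBasis α σ) (hx : x ∈ chamberComplement α)
    {k js j : Fin n} (hk : k ∉ σ) (hpos : ∀ i ∈ σ, 0 < coords α σ x i) (hjs : js ∈ σ)
    (hujs : 0 < coords α σ (α k) js)
    (hmin : ∀ i ∈ σ, 0 < coords α σ (α k) i →
      coords α σ x js / coords α σ (α k) js ≤ coords α σ x i / coords α σ (α k) i)
    (hj : j ∈ σ) (hjjs : j ≠ js) (huj : coords α σ (α k) j ≠ 0) :
    x ∉ coneSet α (insert k (σ.erase j)) := by
  set u := coords α σ (α k)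
  set t := coords α σ x
  have h' := h.exchange hk hj huj
  rw [mem_coneSet_iff h']
  intro hnn
  rcases huj.lt_or_gt with hneg | hpos'
  · have hk' := hnn k (Finset.mem_insert_self _ _)
    rw [coords_exchange h hk hj huj x (Finset.mem_insert_self _ _), if_pos rfl] at hk'
    exact (div_neg_of_pos_of_neg (hpos j hj) hneg).not_ge hk'
  · have hmem : js ∈ insert k (σ.erase j) :=
      Finset.mem_insert_of_mem (Finset.mem_erase.mpr ⟨hjjs.symm, hjs⟩)
    have hne := coords_ne_zero_of_mem_chamberComplement h' hx hmem
    have hle := hnn js hmem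
    rw [coords_exchange h hk hj huj x hmem, if_neg fun e : js = k => hk (e ▸ hjs)] at hne hle
    have hratio : t js ≤ u js * (t j / u j) := (div_le_iff₀' hujs).mp (hmin j hj hpos')
    exact hne (by linarith)

theorem exists_pivot (hα : ∀ i, α i ≠ 0) (hx : x ∈ chamberComplement α)
    (hτ : IsConeBasis α τ) (hxτ : x ∈ coneSet α τ) (h : IsConeBasis α σ) (hστ : σ ≠ τ)
    (hpos : ∀ i ∈ σ, 0 < coords α σ x i) :
    ∃ σ', IsConeBasis α σ' ∧ weightOutside α τ x σ' < weightOutside α τ x σ ∧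
      Phi α σ ∈ Submodule.span ℝ (insert (Phi α σ') (phisMissing α x)) := by
  obtain ⟨k, hkτ, hk, hw⟩ := exists_entering h hτ hxτ (weightOutside_pos h hτ hστ hpos)
  set u := coords α σ (α k)
  set t := coords α σ x
  have hup : (σ.filter fun j => 0 < u j).Nonempty := by
    obtain ⟨j, hj, hj'⟩ := Finset.exists_lt_of_sum_lt (f := fun _ => (0 : ℝ)) (by simpa using hw)
    exact ⟨j, Finset.mem_filter.mpr ⟨(Finset.mem_sdiff.mp hj).1, hj'⟩⟩
  obtain ⟨js, hjs, hmin⟩ := Finset.exists_min_image _ (fun j => t j / u j) hup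
  obtain ⟨hjsσ, hujs⟩ := Finset.mem_filter.mp hjs
  refine ⟨_, h.exchange hk hjsσ hujs.ne', ?_, ?_⟩
  · rw [weightOutside_exchange h hkτ hk hjsσ hujs.ne']
    nlinarith [mul_pos (div_pos (hpos js hjsσ) hujs) hw]
  · rw [phi_eq_sum_smul_phi_insert_erase hα hk u (sum_coords_smul h (α k)).symm]
    refine Submodule.sum_mem _ fun j hj => ?_
    by_cases huj : u j = 0
    · simp [huj]
    refine Submodule.smul_mem _ _ (Submodule.subset_span ?_)
    rcases eq_or_ne j js with rfl | hjjs
    · exact Set.mem_insert _ _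
    · refine Set.mem_insert_of_mem _ ⟨_, h.exchange hk hj huj, ?_, rfl⟩
      exact notMem_coneSet_exchange h hx hk hpos hjsσ hujs
        (fun i hi hui => hmin i (Finset.mem_filter.mpr ⟨hi, hui⟩)) hj hjjs huj

theorem phi_mem_span_of_mem_chamberComplement (hα : ∀ i, α i ≠ 0)
    (hx : x ∈ chamberComplement α) (hτ : IsConeBasis α τ) (hxτ : x ∈ coneSet α τ)
    (hσ : IsConeBasis α σ) : Phi α σ ∈ Submodule.span ℝ ({Phi α τ} ∪ phisMissing α x) := by
  induction σ using (Finite.wellFounded_of_trans_of_irrefl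
    (InvImage (· < ·) (weightOutside α τ x))).induction with
  | _ σ ih =>
  by_cases hστ : σ = τ
  · exact Submodule.subset_span (Or.inl (congrArg (Phi α) hστ))
  by_cases hpos : ∀ i ∈ σ, 0 < coords α σ x i
  · obtain ⟨σ', hσ', hlt, hmem⟩ := exists_pivot hα hx hτ hxτ hσ hστ hpos
    refine Submodule.span_le.mpr (Set.insert_subset_iff.mpr ⟨ih σ' hlt hσ', ?_⟩) hmem
    exact fun y hy => Submodule.subset_span (Or.inr hy)
  · push Not at hpos
    obtain ⟨i, hi, hle⟩ := hpos
    refine Submodule.subset_span (Or.inr ⟨σ, hσ, fun hxσ => ?_, rfl⟩)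
    exact coords_ne_zero_of_mem_chamberComplement hσ hx hi
      (le_antisymm hle ((mem_coneSet_iff hσ).mp hxσ i hi))

end Descent

end WallCrossing

theorem phi_mem_span_wall_crossing_general {r n : ℕ} (α : Fin n → Fin r → ℝ)
    (hα : ∀ i, α i ≠ 0)
    (c : Set (Fin r → ℝ)) (hc : IsChamber α c)
    (τ : Finset (Fin n)) (hτ : IsConeBasis α τ) (hcτ : c ⊆ coneSet α τ)
    (ρ : Finset (Fin n)) (hρ : IsConeBasis α ρ) :
    Phi α ρ ∈ Submodule.span ℝ
      ({Phi α τ} ∪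
        {x | ∃ σ : Finset (Fin n), IsConeBasis α σ ∧ ¬ c ⊆ coneSet α σ ∧ x = Phi α σ}) := by
  obtain ⟨x, hx, rfl⟩ := hc
  have hxc : x ∈ connectedComponentIn (chamberComplement α) x := mem_connectedComponentIn hx
  refine Submodule.span_mono ?_ (phi_mem_span_of_mem_chamberComplement hα hx hτ (hcτ hxc) hρ)
  rintro _ (hτ' | ⟨σ, hσ, hxσ, rfl⟩)
  · exact Or.inl hτ'
  · exact Or.inr ⟨σ, hσ, fun hsub => hxσ (hsub hxc), rfl⟩

/-- **Wall-crossing decomposition.** Let `c` be a chamber of a polarized spanning list `𝔄`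
and let `τ` index a basis from `𝔄` with `c ⊆ Cone(αⱼ : j ∈ τ)`. Then for every subset `ρ`
indexing a basis from `𝔄`, the fraction `Φ_ρ` lies in the span of `Φ_τ` and the fractions
`Φ_σ` over bases `σ` whose cone does not contain `c`. -/
theorem phi_mem_span_wall_crossing {r n : ℕ} (α : Fin n → Fin r → ℝ)
    (hα : ∀ i, α i ≠ 0) (hpol : Polarized α)
    (hspan : Submodule.span ℝ (Set.range α) = ⊤)
    (c : Set (Fin r → ℝ)) (hc : IsChamber α c)
    (τ : Finset (Fin n)) (hτ : IsConeBasis α τ) (hcτ : c ⊆ coneSet α τ)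
    (ρ : Finset (Fin n)) (hρ : IsConeBasis α ρ) :
    Phi α ρ ∈ Submodule.span ℝ
      ({Phi α τ} ∪
        {x | ∃ σ : Finset (Fin n), IsConeBasis α σ ∧ ¬ c ⊆ coneSet α σ ∧ x = Phi α σ}) :=
  phi_mem_span_wall_crossing_general α hα c hc τ hτ hcτ ρ hρ
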